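/- Independence/product rule for disjunction: for formulas α and β, μ(α ∨ β) = 1 − (1 − μ(α))·(1 − μ(β)), i.e., μ(α∨β) = μ(α) + μ(β) − μ(α)·μ(β). -/

import Mathlib

/-- Propositional formulas built from atoms via ¬, ∨, →. -/
inductive Formula (A : Type) : Type
  | atom : A → Formula A
  | neg  : Formula A → Formula A
  | orr  : Formula A → Formula A → Formula A
  | imp  : Formula A → Formula A → Formula A
deriving DecidableEq

/-- Well-formed sequences over a collection `V` of truth valuations. -/
inductive WFS (V : Type) : Type
  | leaf : V → WFS V
  | pair : WFS V → WFS V → WFS V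
deriving DecidableEq

/-- Association between a WFS and a formula. -/
def Assoc {V A : Type} : WFS V → Formula A → Prop
  | WFS.leaf _, Formula.atom _ => True
  | s, Formula.neg β => Assoc s β
  | WFS.pair s₁ s₂, Formula.orr α β => Assoc s₁ α ∧ Assoc s₂ β
  | WFS.pair s₁ s₂, Formula.imp α β => Assoc s₁ α ∧ Assoc s₂ β
  | _, _ => False

/-- Justification of a formula by a WFS (PML semantics). -/
def Justif {V A : Type} (val : V → A → Bool) : WFS V → Formula A → Prop
  | WFS.leaf v, Formula.atom a => val v a = true
  | s, Formula.neg β => ¬ Justif val s β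
  | WFS.pair s₁ s₂, Formula.orr α β => Justif val s₁ α ∨ Justif val s₂ β
  | WFS.pair s₁ s₂, Formula.imp α β => ¬ Justif val s₁ α ∨ Justif val s₂ β
  | _, _ => False

/-- Multiplicative weight allotment extending a basic weight distribution. -/
def weight {V : Type} (pbar : V → ℝ) : WFS V → ℝ
  | WFS.leaf v => pbar v
  | WFS.pair s₁ s₂ => weight pbar s₁ * weight pbar s₂

/-- The (finite) set of WFS associated to a formula. -/
def assocSeqs {V A : Type} [Fintype V] [DecidableEq V] : Formula A → Finset (WFS V)
  | Formula.atom _ => Finset.univ.image WFS.leaf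
  | Formula.neg β => assocSeqs β
  | Formula.orr α β => (assocSeqs α ×ˢ assocSeqs β).image fun q => WFS.pair q.1 q.2
  | Formula.imp α β => (assocSeqs α ×ˢ assocSeqs β).image fun q => WFS.pair q.1 q.2

-- The logical measure of a formula: total weight of associated justifying sequences.
open scoped Classical in
noncomputable def mu {V A : Type} [Fintype V] [DecidableEq V]
    (pbar : V → ℝ) (val : V → A → Bool) (φ : Formula A) : ℝ :=
  ∑ s ∈ (assocSeqs φ).filter (fun s => Justif val s φ), weight pbar s

/-- Derived conjunction: α ∧ β := ¬(¬α ∨ ¬β). -/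
def Formula.conj {A : Type} (α β : Formula A) : Formula A :=
  Formula.neg (Formula.orr (Formula.neg α) (Formula.neg β))

/-- Classical Boolean semantics. -/
def evalF {A : Type} (v : A → Bool) : Formula A → Bool
  | Formula.atom a => v a
  | Formula.neg α => !(evalF v α)
  | Formula.orr α β => evalF v α || evalF v β
  | Formula.imp α β => !(evalF v α) || evalF v β

/-- Diagonal sequence: the valuation `v` at every leaf position of a formula. -/
def diag {V A : Type} (v : V) : Formula A → WFS V
  | Formula.atom _ => WFS.leaf v
  | Formula.neg α => diag v α
  | Formula.orr α β => WFS.pair (diag v α) (diag v β)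
  | Formula.imp α β => WFS.pair (diag v α) (diag v β)

/-- Number of atom occurrences in a formula. -/
def numAtoms {A : Type} : Formula A → ℕ
  | Formula.atom _ => 1
  | Formula.neg α => numAtoms α
  | Formula.orr α β => numAtoms α + numAtoms β
  | Formula.imp α β => numAtoms α + numAtoms β


theorem WFS.pair_uncurry_injective {V : Type} :
    Function.Injective fun q : WFS V × WFS V => WFS.pair q.1 q.2 := by
  rintro ⟨_, _⟩ ⟨_, _⟩ h
  cases h
  rfl

section Measure

variable {V A : Type} [DecidableEq V] {pbar : V → ℝ}

theorem sum_weight_image_pair (s t : Finset (WFS V)) :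
    ∑ x ∈ (s ×ˢ t).image (fun q => WFS.pair q.1 q.2), weight pbar x
      = (∑ x ∈ s, weight pbar x) * ∑ y ∈ t, weight pbar y := by
  rw [Finset.sum_image WFS.pair_uncurry_injective.injOn, Finset.sum_product,
    Finset.sum_mul_sum]
  rfl

variable [Fintype V]

theorem sum_weight_assocSeqs (hsum : ∑ v, pbar v = 1) :
    ∀ φ : Formula A, ∑ s ∈ (assocSeqs φ : Finset (WFS V)), weight pbar s = 1
  | .atom _ => by
    rw [assocSeqs, Finset.sum_image fun _ _ _ _ h => WFS.leaf.inj h]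
    exact hsum
  | .neg φ => sum_weight_assocSeqs hsum φ
  | .orr φ ψ | .imp φ ψ => by
    rw [assocSeqs, sum_weight_image_pair, sum_weight_assocSeqs hsum φ,
      sum_weight_assocSeqs hsum ψ, one_mul]

open scoped Classical in
theorem one_sub_mu (hsum : ∑ v, pbar v = 1) (val : V → A → Bool) (φ : Formula A) :
    1 - mu pbar val φ
      = ∑ s ∈ (assocSeqs φ).filter (fun s => ¬ Justif val s φ), weight pbar s := by
  rw [← sum_weight_assocSeqs hsum φ, mu,
    ← Finset.sum_filter_add_sum_filter_not _ (fun s => Justif val s φ)]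
  ring

-- A pair fails to justify `α ∨ β` exactly when both components fail, so the weight of the
-- failing pairs factors.
theorem one_sub_mu_orr (hsum : ∑ v, pbar v = 1) (val : V → A → Bool) (α β : Formula A) :
    1 - mu pbar val (.orr α β) = (1 - mu pbar val α) * (1 - mu pbar val β) := by
  classical
  rw [one_sub_mu hsum, one_sub_mu hsum, one_sub_mu hsum, assocSeqs, Finset.filter_image]
  have hfilter : (assocSeqs α ×ˢ assocSeqs β).filter
        (fun q : WFS V × WFS V => ¬ Justif val (.pair q.1 q.2) (.orr α β))
      = (assocSeqs α).filter (fun s => ¬ Justif val s α)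
          ×ˢ (assocSeqs β).filter (fun s => ¬ Justif val s β) := by
    rw [← Finset.filter_product]
    simp only [Justif, not_or]
  rw [hfilter, sum_weight_image_pair]

end Measure

theorem stmt12_general {V A : Type} [Fintype V] [DecidableEq V] (pbar : V → ℝ)
    (val : V → A → Bool)
    (hsum : ∑ v, pbar v = 1) (α β : Formula A) :
    mu pbar val (Formula.orr α β)
      = 1 - (1 - mu pbar val α) * (1 - mu pbar val β) ∧
    mu pbar val (Formula.orr α β)
      = mu pbar val α + mu pbar val β - mu pbar val α * mu pbar val β := by
  have h := one_sub_mu_orr hsum val α β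
  constructor <;> linear_combination -h

/-- product rule for disjunction. -/
theorem stmt12 {V A : Type} [Fintype V] [DecidableEq V] (pbar : V → ℝ)
    (val : V → A → Bool)
    (hnn : ∀ v, 0 ≤ pbar v) (hsum : ∑ v, pbar v = 1) (α β : Formula A) :
    mu pbar val (Formula.orr α β)
      = 1 - (1 - mu pbar val α) * (1 - mu pbar val β) ∧
    mu pbar val (Formula.orr α β)
      = mu pbar val α + mu pbar val β - mu pbar val α * mu pbar val β :=
  stmt12_general pbar val hsum α β
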